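/- The group of units of Z[τ] is exactly {±τ^k : k ∈ ℤ}, i.e., it is generated by -1 and τ. -/

import Mathlib

/-!
A unit `a + bτ` has norm `a² - ab - b² = ±1`, because the norm form is multiplicative.
Multiplying by `τ` or by `τ⁻¹ = 1 + τ` acts on coordinates by `(a, b) ↦ (b, a - b)` and
`(a, b) ↦ (a + b, a)`, preserving `|norm| = 1`, and when `a, b ≠ 0` the norm equation forces one
of the two moves to decrease `|a| + |b|`. The descent ends at `±1` or `±τ`.
-/

noncomputable def tau : ℝ := (Real.sqrt 5 - 1) / 2

def Ztau : Set ℝ := {x | ∃ a b : ℤ, x = a + b * tau}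

open Real goldenRatio

lemma tau_eq_neg_goldenConj : tau = -ψ := by
  rw [tau, goldenConj]; ring

lemma tau_ne_zero : tau ≠ 0 := by
  simpa [tau_eq_neg_goldenConj] using goldenConj_ne_zero

lemma tau_sq : tau ^ 2 = 1 - tau := by
  rw [tau_eq_neg_goldenConj, neg_sq, goldenConj_sq]; ring

lemma tau_inv : tau⁻¹ = 1 + tau := by
  rw [tau_eq_neg_goldenConj, inv_neg, inv_goldenConj, ← one_sub_goldenConj]; ring

lemma irrational_tau : Irrational tau := by
  simpa [tau_eq_neg_goldenConj] using goldenConj_irrational.neg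

lemma coords_injective {a b c d : ℤ} (h : (a : ℝ) + b * tau = c + d * tau) :
    a = c ∧ b = d := by
  have hbd : b = d := by
    by_contra hne
    have hirr := irrational_tau.intCast_mul (sub_ne_zero.mpr hne)
    exact hirr.ne_int (c - a) (by push_cast; linear_combination h)
  subst hbd
  exact ⟨by exact_mod_cast add_right_cancel h, rfl⟩

lemma coords_mul_coords (a b c d : ℤ) :
    ((a : ℝ) + b * tau) * (c + d * tau) =
      ((a * c + b * d : ℤ) : ℝ) + ((a * d + b * c - b * d : ℤ) : ℝ) * tau := by
  push_cast
  linear_combination ((b : ℝ) * d) * tau_sq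

lemma mul_mem_Ztau {x y : ℝ} (hx : x ∈ Ztau) (hy : y ∈ Ztau) : x * y ∈ Ztau := by
  obtain ⟨a, b, rfl⟩ := hx
  obtain ⟨c, d, rfl⟩ := hy
  exact ⟨_, _, coords_mul_coords a b c d⟩

lemma neg_mem_Ztau {x : ℝ} (hx : x ∈ Ztau) : -x ∈ Ztau := by
  obtain ⟨a, b, rfl⟩ := hx
  exact ⟨-a, -b, by push_cast; ring⟩

lemma zpow_tau_mem_Ztau (k : ℤ) : tau ^ k ∈ Ztau := by
  induction k using Int.induction_on with
  | zero => exact ⟨1, 0, by simp⟩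
  | succ i ih =>
    rw [zpow_add_one₀ tau_ne_zero]
    exact mul_mem_Ztau ih ⟨0, 1, by simp⟩
  | pred i ih =>
    rw [zpow_sub_one₀ tau_ne_zero, tau_inv]
    exact mul_mem_Ztau ih ⟨1, 1, by simp⟩

/-- The norm `(a + bτ)(a + bτ')` of `a + bτ`, where `τ' = -1 - τ` is the conjugate of `τ`. -/
def tauNorm (a b : ℤ) : ℤ := a ^ 2 - a * b - b ^ 2

lemma tauNorm_mul (a b c d : ℤ) :
    tauNorm (a * c + b * d) (a * d + b * c - b * d) = tauNorm a b * tauNorm c d := by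
  unfold tauNorm; ring

lemma isUnit_tauNorm_of_mul_eq_one {a b c d : ℤ} (h : ((a : ℝ) + b * tau) * (c + d * tau) = 1) :
    IsUnit (tauNorm a b) := by
  rw [coords_mul_coords] at h
  obtain ⟨h₁, h₂⟩ := coords_injective (c := 1) (d := 0) (by rw [h]; simp)
  exact .of_mul_eq_one (tauNorm c d) (by rw [← tauNorm_mul, h₁, h₂]; rfl)

lemma natAbs_sub_lt_or_natAbs_add_lt {a b : ℤ} (h : IsUnit (tauNorm a b)) (ha : a ≠ 0)
    (hb : b ≠ 0) : (a - b).natAbs < a.natAbs ∨ (a + b).natAbs < b.natAbs := by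
  simp only [Int.natAbs_lt_iff_sq_lt]
  by_contra! hge
  have ha2 : 0 < a ^ 2 := sq_pos_iff.mpr ha
  have hb2 : 0 < b ^ 2 := sq_pos_iff.mpr hb
  rcases Int.isUnit_iff.mp h with hN | hN <;> unfold tauNorm at hN <;>
    rcases lt_or_gt_of_ne (mul_ne_zero ha hb) with hab | hab <;> nlinarith

lemma tau_mul_coords (a b : ℤ) :
    tau * (a + b * tau) = ((b : ℤ) : ℝ) + ((a - b : ℤ) : ℝ) * tau := by
  push_cast
  linear_combination (b : ℝ) * tau_sq

lemma tau_inv_mul_coords (a b : ℤ) :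
    tau⁻¹ * (a + b * tau) = ((a + b : ℤ) : ℝ) + (a : ℝ) * tau := by
  rw [tau_inv]
  push_cast
  linear_combination (b : ℝ) * tau_sq

lemma tauNorm_sub_swap (a b : ℤ) : tauNorm b (a - b) = -tauNorm a b := by
  unfold tauNorm; ring

lemma tauNorm_add_swap (a b : ℤ) : tauNorm (a + b) a = -tauNorm a b := by
  unfold tauNorm; ring

def IsSignedTauPow (x : ℝ) : Prop := ∃ k : ℤ, x = tau ^ k ∨ x = -tau ^ k

lemma IsSignedTauPow.of_zpow_mul {x : ℝ} (m : ℤ) (h : IsSignedTauPow (tau ^ m * x)) :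
    IsSignedTauPow x := by
  have hm : tau ^ m ≠ 0 := zpow_ne_zero m tau_ne_zero
  obtain ⟨k, hk | hk⟩ := h <;> refine ⟨k - m, ?_⟩ <;> rw [zpow_sub₀ tau_ne_zero]
  · exact .inl (eq_div_of_mul_eq hm (by rw [mul_comm, hk]))
  · exact .inr (by rw [← neg_div]; exact eq_div_of_mul_eq hm (by rw [mul_comm, hk]))

theorem isSignedTauPow_of_isUnit_tauNorm (a b : ℤ) (h : IsUnit (tauNorm a b)) :
    IsSignedTauPow (a + b * tau) := by
  rcases eq_or_ne b 0 with rfl | hb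
  · have : IsUnit a := (isUnit_pow_iff two_ne_zero).mp (by simpa [tauNorm] using h)
    rcases Int.isUnit_iff.mp this with rfl | rfl
    exacts [⟨0, .inl (by simp)⟩, ⟨0, .inr (by simp)⟩]
  rcases eq_or_ne a 0 with rfl | ha
  · have : IsUnit b := (isUnit_pow_iff two_ne_zero).mp (by simpa [tauNorm] using h)
    rcases Int.isUnit_iff.mp this with rfl | rfl
    exacts [⟨1, .inl (by simp)⟩, ⟨1, .inr (by simp)⟩]
  rcases natAbs_sub_lt_or_natAbs_add_lt h ha hb with hlt | hlt
  · refine IsSignedTauPow.of_zpow_mul 1 ?_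
    rw [zpow_one, tau_mul_coords]
    exact isSignedTauPow_of_isUnit_tauNorm b (a - b) (by rw [tauNorm_sub_swap]; exact h.neg)
  · refine IsSignedTauPow.of_zpow_mul (-1) ?_
    rw [zpow_neg_one, tau_inv_mul_coords]
    exact isSignedTauPow_of_isUnit_tauNorm (a + b) a (by rw [tauNorm_add_swap]; exact h.neg)
termination_by a.natAbs + b.natAbs

theorem stmt9 (u : ℝ) :
    (u ∈ Ztau ∧ ∃ w ∈ Ztau, u * w = 1) ↔ ∃ k : ℤ, u = tau ^ k ∨ u = -tau ^ k := by
  constructor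
  · rintro ⟨⟨a, b, rfl⟩, w, ⟨c, d, rfl⟩, huw⟩
    exact isSignedTauPow_of_isUnit_tauNorm a b (isUnit_tauNorm_of_mul_eq_one huw)
  · rintro ⟨k, hu⟩
    have hk : tau ^ k * tau ^ (-k) = 1 := by
      rw [zpow_neg, mul_inv_cancel₀ (zpow_ne_zero k tau_ne_zero)]
    rcases hu with rfl | rfl
    · exact ⟨zpow_tau_mem_Ztau k, _, zpow_tau_mem_Ztau (-k), hk⟩
    · exact ⟨neg_mem_Ztau (zpow_tau_mem_Ztau k), _, neg_mem_Ztau (zpow_tau_mem_Ztau (-k)),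
        by rwa [neg_mul_neg]⟩
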